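/- arXiv:2605.20514 — 4 statements merged into one kernel-verified Lean document; each statement's English description precedes it below -/
import Mathlib

section
/- Let σ ∈ C¹(ℝ). Every FLASH-MAX network (E, B) with activation σ (of any finite width, with any choice of weights w_{ijk} ∈ ℝ, biases b_{ijk} ∈ ℝ, and spatial frequencies (z_{ijk1}, z_{ijk2}, z_{ijk3}) ∈ ℝ³) is a classical solution of the homogeneous Maxwell equations at every point of ℝ⁴: ∂ₜE − ∇×B = 0, ∂ₜB + ∇×E = 0, ∇·E = 0, and ∇·B = 0. -/
open MeasureTheory Real Set

noncomputable section

/-- Partial derivative of a scalar function on ℝ⁴ in the `i`-th coordinate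
(coordinates are `(t,x,y,z)`). -/
def pd4 (i : Fin 4) (f : (Fin 4 → ℝ) → ℝ) : (Fin 4 → ℝ) → ℝ :=
  fun x => fderiv ℝ f x (Pi.single i 1)

/-- Partial derivative of a scalar function on ℝ³ in the `i`-th coordinate. -/
def pd3 (i : Fin 3) (f : (Fin 3 → ℝ) → ℝ) : (Fin 3 → ℝ) → ℝ :=
  fun x => fderiv ℝ f x (Pi.single i 1)

/-- Multi-index derivative `∂^α` on ℝ⁴. -/
def mderiv4 (α : Fin 4 → ℕ) (f : (Fin 4 → ℝ) → ℝ) : (Fin 4 → ℝ) → ℝ :=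
  (pd4 0)^[α 0] ((pd4 1)^[α 1] ((pd4 2)^[α 2] ((pd4 3)^[α 3] f)))

/-- Multi-index derivative `∂^α` on ℝ³. -/
def mderiv3 (α : Fin 3 → ℕ) (f : (Fin 3 → ℝ) → ℝ) : (Fin 3 → ℝ) → ℝ :=
  (pd3 0)^[α 0] ((pd3 1)^[α 1] ((pd3 2)^[α 2] f))

/-- Purely spatial multi-index derivative `∂^α_x` of a function on ℝ⁴. -/
def mderivSp (α : Fin 3 → ℕ) (f : (Fin 4 → ℝ) → ℝ) : (Fin 4 → ℝ) → ℝ :=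
  (pd4 1)^[α 0] ((pd4 2)^[α 1] ((pd4 3)^[α 2] f))

/-- Spatial curl of a time-dependent vector field on ℝ⁴. -/
def scurl (F : (Fin 4 → ℝ) → Fin 3 → ℝ) (x : Fin 4 → ℝ) : Fin 3 → ℝ :=
  ![pd4 2 (fun y => F y 2) x - pd4 3 (fun y => F y 1) x,
    pd4 3 (fun y => F y 0) x - pd4 1 (fun y => F y 2) x,
    pd4 1 (fun y => F y 1) x - pd4 2 (fun y => F y 0) x]

/-- Spatial divergence of a time-dependent vector field on ℝ⁴. -/
def sdiv (F : (Fin 4 → ℝ) → Fin 3 → ℝ) (x : Fin 4 → ℝ) : ℝ :=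
  pd4 1 (fun y => F y 0) x + pd4 2 (fun y => F y 1) x + pd4 3 (fun y => F y 2) x

/-- Divergence of a vector field on ℝ³. -/
def div3 (F : (Fin 3 → ℝ) → Fin 3 → ℝ) (x : Fin 3 → ℝ) : ℝ :=
  pd3 0 (fun y => F y 0) x + pd3 1 (fun y => F y 1) x + pd3 2 (fun y => F y 2) x

/-- Spatial Laplacian of a scalar function on ℝ⁴. -/
def lap4 (f : (Fin 4 → ℝ) → ℝ) : (Fin 4 → ℝ) → ℝ :=
  fun x => pd4 1 (pd4 1 f) x + pd4 2 (pd4 2 f) x + pd4 3 (pd4 3 f) x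

/-- Euclidean norm on ℝ³ (as `Fin 3 → ℝ`). -/
def enorm3 (v : Fin 3 → ℝ) : ℝ := Real.sqrt (v 0 ^ 2 + v 1 ^ 2 + v 2 ^ 2)

/-- Cross product on ℝ³. -/
def cross3 (u v : Fin 3 → ℝ) : Fin 3 → ℝ :=
  ![u 1 * v 2 - u 2 * v 1, u 2 * v 0 - u 0 * v 2, u 0 * v 1 - u 1 * v 0]

/-- The E-part (first three components) of a vector in ℝ⁶. -/
def epart (v : Fin 6 → ℝ) : Fin 3 → ℝ := fun m => v (Fin.castLE (by norm_num) m)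

/-- The B-part (last three components) of a vector in ℝ⁶. -/
def bpart (v : Fin 6 → ℝ) : Fin 3 → ℝ := fun m => v (m.addNat 3)

/-- First Noetherian multiplier `p₁`. -/
def p1NM (z : Fin 4 → ℝ) : Fin 6 → ℝ :=
  ![-(z 1 * z 3), -(z 2 * z 3), z 0 ^ 2 - z 3 ^ 2, -(z 0 * z 2), z 0 * z 1, 0]

/-- Second Noetherian multiplier `p₂`. -/
def p2NM (z : Fin 4 → ℝ) : Fin 6 → ℝ :=
  ![z 1 * z 2, -(z 0 ^ 2) + z 2 ^ 2, z 2 * z 3, -(z 0 * z 3), 0, z 0 * z 1]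

/-- The family of both Noetherian multipliers. -/
def pNM : Fin 2 → (Fin 4 → ℝ) → Fin 6 → ℝ := ![p1NM, p2NM]

/-- Signs `+1, -1` indexed by `Fin 2`. -/
def sgn2 : Fin 2 → ℝ := ![1, -1]

/-- The full spacetime frequency `z = (j·√(ζ₁²+ζ₂²+ζ₃²), ζ)` built from a sign
index `j` and a spatial frequency `ζ`. -/
def freq (j : Fin 2) (ζ : Fin 3 → ℝ) : Fin 4 → ℝ :=
  Matrix.vecCons (sgn2 j * enorm3 ζ) ζ

/-- The ℝ⁶-valued output of a FLASH-MAX network of width `W` with activation `σ`,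
weights `w`, biases `b` and spatial frequencies `ζ`. -/
def flashOut (σ : ℝ → ℝ) (W : ℕ) (w b : Fin 2 → Fin 2 → Fin W → ℝ)
    (ζ : Fin 2 → Fin 2 → Fin W → Fin 3 → ℝ) (x : Fin 4 → ℝ) : Fin 6 → ℝ :=
  fun l => ∑ i : Fin 2, ∑ j : Fin 2, ∑ k : Fin W,
    w i j k * σ ((∑ m : Fin 4, x m * freq j (ζ i j k) m) + b i j k)
      * pNM i (freq j (ζ i j k)) l

/-- `(E, B)` is a FLASH-MAX network of some finite width with activation `σ`. -/
def IsFlashMax (σ : ℝ → ℝ) (E B : (Fin 4 → ℝ) → Fin 3 → ℝ) : Prop :=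
  ∃ (W : ℕ) (w b : Fin 2 → Fin 2 → Fin W → ℝ)
    (ζ : Fin 2 → Fin 2 → Fin W → Fin 3 → ℝ),
    ∀ x : Fin 4 → ℝ,
      E x = epart (flashOut σ W w b ζ x) ∧ B x = bpart (flashOut σ W w b ζ x)

/-- The spatial part of a point of ℝ⁴. -/
def spatial (x : Fin 4 → ℝ) : Fin 3 → ℝ := fun m => x m.succ

/-- The spacetime point `(t, y)` of ℝ⁴. -/
def emb0 (t : ℝ) (y : Fin 3 → ℝ) : Fin 4 → ℝ := Matrix.vecCons t y

/-- The spacetime cylinder `(t₁,t₂) × Ω`. -/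
def slab (t₁ t₂ : ℝ) (Ω : Set (Fin 3 → ℝ)) : Set (Fin 4 → ℝ) :=
  {x | x 0 ∈ Set.Ioo t₁ t₂ ∧ spatial x ∈ Ω}

/-- `σ` is not (the evaluation of) a polynomial. -/
def NotPolynomial (σ : ℝ → ℝ) : Prop :=
  ¬ ∃ p : Polynomial ℝ, ∀ x : ℝ, σ x = p.eval x

/-- Classical homogeneous Maxwell equations at a point. -/
def MaxwellAt (E B : (Fin 4 → ℝ) → Fin 3 → ℝ) (x : Fin 4 → ℝ) : Prop :=
  (∀ c : Fin 3, pd4 0 (fun y => E y c) x - scurl B x c = 0) ∧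
  (∀ c : Fin 3, pd4 0 (fun y => B y c) x + scurl E x c = 0) ∧
  sdiv E x = 0 ∧ sdiv B x = 0

/-- `(E, B)` is a distributional solution of the homogeneous Maxwell equations
on ℝ⁴. -/
def IsDistribMaxwell (E B : (Fin 4 → ℝ) → Fin 3 → ℝ) : Prop :=
  (∀ φ : (Fin 4 → ℝ) → Fin 3 → ℝ, ContDiff ℝ (⊤ : ℕ∞) φ → HasCompactSupport φ →
      ∫ x : Fin 4 → ℝ,
        ((∑ c : Fin 3, E x c * pd4 0 (fun y => φ y c) x) +
          ∑ c : Fin 3, B x c * scurl φ x c) = 0) ∧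
  (∀ φ : (Fin 4 → ℝ) → Fin 3 → ℝ, ContDiff ℝ (⊤ : ℕ∞) φ → HasCompactSupport φ →
      ∫ x : Fin 4 → ℝ,
        ((∑ c : Fin 3, B x c * pd4 0 (fun y => φ y c) x) -
          ∑ c : Fin 3, E x c * scurl φ x c) = 0) ∧
  (∀ ψ : (Fin 4 → ℝ) → ℝ, ContDiff ℝ (⊤ : ℕ∞) ψ → HasCompactSupport ψ →
      ∫ x : Fin 4 → ℝ, ∑ c : Fin 3, E x c * pd4 c.succ ψ x = 0) ∧
  (∀ ψ : (Fin 4 → ℝ) → ℝ, ContDiff ℝ (⊤ : ℕ∞) ψ → HasCompactSupport ψ →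
      ∫ x : Fin 4 → ℝ, ∑ c : Fin 3, B x c * pd4 c.succ ψ x = 0)

/-- `g` is the weak derivative `∂^α u` (of scalar functions on ℝ⁴). -/
def IsWeakDeriv (α : Fin 4 → ℕ) (u g : (Fin 4 → ℝ) → ℝ) : Prop :=
  ∀ φ : (Fin 4 → ℝ) → ℝ, ContDiff ℝ (⊤ : ℕ∞) φ → HasCompactSupport φ →
    ∫ x : Fin 4 → ℝ, u x * mderiv4 α φ x =
      (-1 : ℝ) ^ (∑ i, α i) * ∫ x : Fin 4 → ℝ, g x * φ x

/-- The `2 × 6` matrix `R(ξ)`. -/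
def Rmat (ξ : Fin 3 → ℝ) : Matrix (Fin 2) (Fin 6) ℝ :=
  Matrix.of ![![ξ 0, ξ 1, ξ 2, 0, 0, 0], ![0, 0, 0, ξ 0, ξ 1, ξ 2]]

/-- The `6 × 4` matrix `P(ξ)` with columns `p₁(|ξ|,ξ), p₂(|ξ|,ξ), p₁(−|ξ|,ξ), p₂(−|ξ|,ξ)`. -/
def Pmat (ξ : Fin 3 → ℝ) : Matrix (Fin 6) (Fin 4) ℝ :=
  Matrix.of fun l c =>
    ![p1NM (Matrix.vecCons (enorm3 ξ) ξ), p2NM (Matrix.vecCons (enorm3 ξ) ξ),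
      p1NM (Matrix.vecCons (-enorm3 ξ) ξ), p2NM (Matrix.vecCons (-enorm3 ξ) ξ)] c l

/-! ### Auxiliary lemmas for the proof -/

lemma cv3' {α : Type*} (a b c d e f : α) : (![a, b, c, d, e, f]) 3 = d := rfl
lemma cv4' {α : Type*} (a b c d e f : α) : (![a, b, c, d, e, f]) 4 = e := rfl
lemma cv5' {α : Type*} (a b c d e f : α) : (![a, b, c, d, e, f]) 5 = f := rfl

/-- The continuous linear map `y ↦ ∑ n, y n * z n`. -/
def Lmap (z : Fin 4 → ℝ) : (Fin 4 → ℝ) →L[ℝ] ℝ :=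
  ∑ n, (ContinuousLinearMap.proj n : (Fin 4 → ℝ) →L[ℝ] ℝ).smulRight (z n)

lemma Lmap_single (z : Fin 4 → ℝ) (m : Fin 4) : Lmap z (Pi.single m 1) = z m := by
  simp [Lmap, ContinuousLinearMap.sum_apply, Pi.single_apply]

lemma hasFDerivAt_lin (z : Fin 4 → ℝ) (b : ℝ) (x : Fin 4 → ℝ) :
    HasFDerivAt (fun y : Fin 4 → ℝ => (∑ n, y n * z n) + b) (Lmap z) x := by
  refine HasFDerivAt.add_const b ?_
  refine HasFDerivAt.fun_sum fun n _ => ?_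
  exact (ContinuousLinearMap.proj n : (Fin 4 → ℝ) →L[ℝ] ℝ).hasFDerivAt.mul_const' (z n)

lemma hasFDerivAt_term (σ : ℝ → ℝ) (hσ : ContDiff ℝ 1 σ) (c bb p : ℝ) (z : Fin 4 → ℝ)
    (x : Fin 4 → ℝ) :
    HasFDerivAt (fun y : Fin 4 → ℝ => c * σ ((∑ n, y n * z n) + bb) * p)
      ((c * deriv σ ((∑ n, x n * z n) + bb) * p) • Lmap z) x := by
  have hg := hasFDerivAt_lin z bb x
  have hσ' : HasDerivAt σ (deriv σ ((∑ n, x n * z n) + bb)) ((∑ n, x n * z n) + bb) :=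
    ((hσ.differentiable one_ne_zero) _).hasDerivAt
  have h2 := ((hσ'.comp_hasFDerivAt x hg).const_mul c).mul_const p
  have heq : p • c • deriv σ ((∑ n, x n * z n) + bb) • Lmap z
      = (c * deriv σ ((∑ n, x n * z n) + bb) * p) • Lmap z := by
    ext v
    simp only [ContinuousLinearMap.smul_apply, smul_eq_mul]
    ring
  rw [← heq]
  exact h2

lemma pd4_flash (σ : ℝ → ℝ) (hσ : ContDiff ℝ 1 σ) {W : ℕ} (w b : Fin 2 → Fin 2 → Fin W → ℝ)
    (ζ : Fin 2 → Fin 2 → Fin W → Fin 3 → ℝ) (l : Fin 6) (m : Fin 4) (x : Fin 4 → ℝ) :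
    pd4 m (fun y => flashOut σ W w b ζ y l) x
      = ∑ i : Fin 2, ∑ j : Fin 2, ∑ k : Fin W,
          w i j k * deriv σ ((∑ n, x n * freq j (ζ i j k) n) + b i j k)
            * pNM i (freq j (ζ i j k)) l * freq j (ζ i j k) m := by
  have H : HasFDerivAt (fun y => flashOut σ W w b ζ y l)
      (∑ i : Fin 2, ∑ j : Fin 2, ∑ k : Fin W,
        (w i j k * deriv σ ((∑ n, x n * freq j (ζ i j k) n) + b i j k)
          * pNM i (freq j (ζ i j k)) l) • Lmap (freq j (ζ i j k))) x := by
    refine HasFDerivAt.fun_sum fun i _ => HasFDerivAt.fun_sum fun j _ => HasFDerivAt.fun_sum fun k _ => ?_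
    exact hasFDerivAt_term σ hσ _ _ _ _ x
  rw [pd4]
  rw [H.fderiv]
  simp only [ContinuousLinearMap.coe_sum', Finset.sum_apply, ContinuousLinearMap.coe_smul',
    Pi.smul_apply, Lmap_single, smul_eq_mul]

lemma enorm3_sq (v : Fin 3 → ℝ) : enorm3 v ^ 2 = v 0 ^ 2 + v 1 ^ 2 + v 2 ^ 2 := by
  rw [enorm3]
  exact Real.sq_sqrt (by positivity)

lemma freq_sq (j : Fin 2) (v : Fin 3 → ℝ) :
    freq j v 0 ^ 2 = freq j v 1 ^ 2 + freq j v 2 ^ 2 + freq j v 3 ^ 2 := by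
  have h0 : freq j v 0 = sgn2 j * enorm3 v := rfl
  have h1 : freq j v 1 = v 0 := rfl
  have h2 : freq j v 2 = v 1 := rfl
  have h3 : freq j v 3 = v 2 := rfl
  have hs : sgn2 j ^ 2 = 1 := by fin_cases j <;> norm_num [sgn2]
  rw [h0, h1, h2, h3, mul_pow, hs, one_mul, enorm3_sq]

section KeyAlgebra

variable (i : Fin 2) (z : Fin 4 → ℝ)

lemma key1 (hz : z 0 ^ 2 = z 1 ^ 2 + z 2 ^ 2 + z 3 ^ 2) :
    pNM i z 0 * z 0 - (pNM i z 5 * z 2 - pNM i z 4 * z 3) = 0 := by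
  fin_cases i <;>
    simp [pNM, p1NM, p2NM, Matrix.cons_val_zero, Matrix.cons_val_one, Matrix.head_cons,
      Matrix.cons_val_two, Matrix.tail_cons, cv3', cv4', cv5'] <;>
    first
      | ring1
      | linear_combination z 0 * hz
      | linear_combination (-(z 0)) * hz
      | linear_combination z 3 * hz
      | linear_combination (-(z 2)) * hz

lemma key2 (hz : z 0 ^ 2 = z 1 ^ 2 + z 2 ^ 2 + z 3 ^ 2) :
    pNM i z 1 * z 0 - (pNM i z 3 * z 3 - pNM i z 5 * z 1) = 0 := by
  fin_cases i <;>
    simp [pNM, p1NM, p2NM, Matrix.cons_val_zero, Matrix.cons_val_one, Matrix.head_cons,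
      Matrix.cons_val_two, Matrix.tail_cons, cv3', cv4', cv5'] <;>
    first
      | ring1
      | linear_combination z 0 * hz
      | linear_combination (-(z 0)) * hz
      | linear_combination z 3 * hz
      | linear_combination (-(z 2)) * hz

lemma key3 (hz : z 0 ^ 2 = z 1 ^ 2 + z 2 ^ 2 + z 3 ^ 2) :
    pNM i z 2 * z 0 - (pNM i z 4 * z 1 - pNM i z 3 * z 2) = 0 := by
  fin_cases i <;>
    simp [pNM, p1NM, p2NM, Matrix.cons_val_zero, Matrix.cons_val_one, Matrix.head_cons,
      Matrix.cons_val_two, Matrix.tail_cons, cv3', cv4', cv5'] <;>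
    first
      | ring1
      | linear_combination z 0 * hz
      | linear_combination (-(z 0)) * hz
      | linear_combination z 3 * hz
      | linear_combination (-(z 2)) * hz

lemma key4 (hz : z 0 ^ 2 = z 1 ^ 2 + z 2 ^ 2 + z 3 ^ 2) :
    pNM i z 3 * z 0 + (pNM i z 2 * z 2 - pNM i z 1 * z 3) = 0 := by
  fin_cases i <;>
    simp [pNM, p1NM, p2NM, Matrix.cons_val_zero, Matrix.cons_val_one, Matrix.head_cons,
      Matrix.cons_val_two, Matrix.tail_cons, cv3', cv4', cv5'] <;>
    first
      | ring1
      | linear_combination z 0 * hz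
      | linear_combination (-(z 0)) * hz
      | linear_combination z 3 * hz
      | linear_combination (-(z 2)) * hz

lemma key5 (hz : z 0 ^ 2 = z 1 ^ 2 + z 2 ^ 2 + z 3 ^ 2) :
    pNM i z 4 * z 0 + (pNM i z 0 * z 3 - pNM i z 2 * z 1) = 0 := by
  fin_cases i <;>
    simp [pNM, p1NM, p2NM, Matrix.cons_val_zero, Matrix.cons_val_one, Matrix.head_cons,
      Matrix.cons_val_two, Matrix.tail_cons, cv3', cv4', cv5'] <;>
    first
      | ring1
      | linear_combination z 0 * hz
      | linear_combination (-(z 0)) * hz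
      | linear_combination z 3 * hz
      | linear_combination (-(z 2)) * hz

lemma key6 (hz : z 0 ^ 2 = z 1 ^ 2 + z 2 ^ 2 + z 3 ^ 2) :
    pNM i z 5 * z 0 + (pNM i z 1 * z 1 - pNM i z 0 * z 2) = 0 := by
  fin_cases i <;>
    simp [pNM, p1NM, p2NM, Matrix.cons_val_zero, Matrix.cons_val_one, Matrix.head_cons,
      Matrix.cons_val_two, Matrix.tail_cons, cv3', cv4', cv5'] <;>
    first
      | ring1
      | linear_combination z 0 * hz
      | linear_combination (-(z 0)) * hz
      | linear_combination z 3 * hz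
      | linear_combination (-(z 2)) * hz

lemma key7 (hz : z 0 ^ 2 = z 1 ^ 2 + z 2 ^ 2 + z 3 ^ 2) :
    pNM i z 0 * z 1 + pNM i z 1 * z 2 + pNM i z 2 * z 3 = 0 := by
  fin_cases i <;>
    simp [pNM, p1NM, p2NM, Matrix.cons_val_zero, Matrix.cons_val_one, Matrix.head_cons,
      Matrix.cons_val_two, Matrix.tail_cons, cv3', cv4', cv5'] <;>
    first
      | ring1
      | linear_combination z 0 * hz
      | linear_combination (-(z 0)) * hz
      | linear_combination z 3 * hz
      | linear_combination (-(z 2)) * hz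

lemma key8 (hz : z 0 ^ 2 = z 1 ^ 2 + z 2 ^ 2 + z 3 ^ 2) :
    pNM i z 3 * z 1 + pNM i z 4 * z 2 + pNM i z 5 * z 3 = 0 := by
  fin_cases i <;>
    simp [pNM, p1NM, p2NM, Matrix.cons_val_zero, Matrix.cons_val_one, Matrix.head_cons,
      Matrix.cons_val_two, Matrix.tail_cons, cv3', cv4', cv5'] <;>
    first
      | ring1
      | linear_combination z 0 * hz
      | linear_combination (-(z 0)) * hz
      | linear_combination z 3 * hz
      | linear_combination (-(z 2)) * hz

end KeyAlgebra

/-- Lemma 1 of the paper: every FLASH-MAX network with `C¹`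
activation is a classical solution of the homogeneous Maxwell equations on ℝ⁴. -/
theorem flashmax_is_maxwell_solution (σ : ℝ → ℝ) (hσ : ContDiff ℝ 1 σ)
    (E B : (Fin 4 → ℝ) → Fin 3 → ℝ) (h : IsFlashMax σ E B) :
    ∀ x : Fin 4 → ℝ, MaxwellAt E B x := by
  obtain ⟨W, w, b, ζ, h⟩ := h
  intro x
  have hE0 : (fun y => E y 0) = fun y => flashOut σ W w b ζ y 0 :=
    funext fun y => by rw [(h y).1]; rfl
  have hE1 : (fun y => E y 1) = fun y => flashOut σ W w b ζ y 1 :=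
    funext fun y => by rw [(h y).1]; rfl
  have hE2 : (fun y => E y 2) = fun y => flashOut σ W w b ζ y 2 :=
    funext fun y => by rw [(h y).1]; rfl
  have hB0 : (fun y => B y 0) = fun y => flashOut σ W w b ζ y 3 :=
    funext fun y => by rw [(h y).2]; rfl
  have hB1 : (fun y => B y 1) = fun y => flashOut σ W w b ζ y 4 :=
    funext fun y => by rw [(h y).2]; rfl
  have hB2 : (fun y => B y 2) = fun y => flashOut σ W w b ζ y 5 :=
    funext fun y => by rw [(h y).2]; rfl
  refine ⟨?_, ?_, ?_, ?_⟩
  · intro c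
    fin_cases c
    · show pd4 0 (fun y => E y 0) x - (pd4 2 (fun y => B y 2) x - pd4 3 (fun y => B y 1) x) = 0
      rw [hE0, hB2, hB1, pd4_flash σ hσ w b ζ, pd4_flash σ hσ w b ζ, pd4_flash σ hσ w b ζ]
      simp only [← Finset.sum_sub_distrib]
      refine Finset.sum_eq_zero fun i _ => Finset.sum_eq_zero fun j _ =>
        Finset.sum_eq_zero fun k _ => ?_
      linear_combination
        (w i j k * deriv σ ((∑ n, x n * freq j (ζ i j k) n) + b i j k)) *
          key1 i (freq j (ζ i j k)) (freq_sq j (ζ i j k))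
    · show pd4 0 (fun y => E y 1) x - (pd4 3 (fun y => B y 0) x - pd4 1 (fun y => B y 2) x) = 0
      rw [hE1, hB0, hB2, pd4_flash σ hσ w b ζ, pd4_flash σ hσ w b ζ, pd4_flash σ hσ w b ζ]
      simp only [← Finset.sum_sub_distrib]
      refine Finset.sum_eq_zero fun i _ => Finset.sum_eq_zero fun j _ =>
        Finset.sum_eq_zero fun k _ => ?_
      linear_combination
        (w i j k * deriv σ ((∑ n, x n * freq j (ζ i j k) n) + b i j k)) *
          key2 i (freq j (ζ i j k)) (freq_sq j (ζ i j k))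
    · show pd4 0 (fun y => E y 2) x - (pd4 1 (fun y => B y 1) x - pd4 2 (fun y => B y 0) x) = 0
      rw [hE2, hB1, hB0, pd4_flash σ hσ w b ζ, pd4_flash σ hσ w b ζ, pd4_flash σ hσ w b ζ]
      simp only [← Finset.sum_sub_distrib]
      refine Finset.sum_eq_zero fun i _ => Finset.sum_eq_zero fun j _ =>
        Finset.sum_eq_zero fun k _ => ?_
      linear_combination
        (w i j k * deriv σ ((∑ n, x n * freq j (ζ i j k) n) + b i j k)) *
          key3 i (freq j (ζ i j k)) (freq_sq j (ζ i j k))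
  · intro c
    fin_cases c
    · show pd4 0 (fun y => B y 0) x + (pd4 2 (fun y => E y 2) x - pd4 3 (fun y => E y 1) x) = 0
      rw [hB0, hE2, hE1, pd4_flash σ hσ w b ζ, pd4_flash σ hσ w b ζ, pd4_flash σ hσ w b ζ]
      simp only [← Finset.sum_sub_distrib, ← Finset.sum_add_distrib]
      refine Finset.sum_eq_zero fun i _ => Finset.sum_eq_zero fun j _ =>
        Finset.sum_eq_zero fun k _ => ?_
      linear_combination
        (w i j k * deriv σ ((∑ n, x n * freq j (ζ i j k) n) + b i j k)) *
          key4 i (freq j (ζ i j k)) (freq_sq j (ζ i j k))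
    · show pd4 0 (fun y => B y 1) x + (pd4 3 (fun y => E y 0) x - pd4 1 (fun y => E y 2) x) = 0
      rw [hB1, hE0, hE2, pd4_flash σ hσ w b ζ, pd4_flash σ hσ w b ζ, pd4_flash σ hσ w b ζ]
      simp only [← Finset.sum_sub_distrib, ← Finset.sum_add_distrib]
      refine Finset.sum_eq_zero fun i _ => Finset.sum_eq_zero fun j _ =>
        Finset.sum_eq_zero fun k _ => ?_
      linear_combination
        (w i j k * deriv σ ((∑ n, x n * freq j (ζ i j k) n) + b i j k)) *
          key5 i (freq j (ζ i j k)) (freq_sq j (ζ i j k))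
    · show pd4 0 (fun y => B y 2) x + (pd4 1 (fun y => E y 1) x - pd4 2 (fun y => E y 0) x) = 0
      rw [hB2, hE1, hE0, pd4_flash σ hσ w b ζ, pd4_flash σ hσ w b ζ, pd4_flash σ hσ w b ζ]
      simp only [← Finset.sum_sub_distrib, ← Finset.sum_add_distrib]
      refine Finset.sum_eq_zero fun i _ => Finset.sum_eq_zero fun j _ =>
        Finset.sum_eq_zero fun k _ => ?_
      linear_combination
        (w i j k * deriv σ ((∑ n, x n * freq j (ζ i j k) n) + b i j k)) *
          key6 i (freq j (ζ i j k)) (freq_sq j (ζ i j k))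
  · show pd4 1 (fun y => E y 0) x + pd4 2 (fun y => E y 1) x + pd4 3 (fun y => E y 2) x = 0
    rw [hE0, hE1, hE2, pd4_flash σ hσ w b ζ, pd4_flash σ hσ w b ζ, pd4_flash σ hσ w b ζ]
    simp only [← Finset.sum_add_distrib]
    refine Finset.sum_eq_zero fun i _ => Finset.sum_eq_zero fun j _ =>
      Finset.sum_eq_zero fun k _ => ?_
    linear_combination
      (w i j k * deriv σ ((∑ n, x n * freq j (ζ i j k) n) + b i j k)) *
        key7 i (freq j (ζ i j k)) (freq_sq j (ζ i j k))
  · show pd4 1 (fun y => B y 0) x + pd4 2 (fun y => B y 1) x + pd4 3 (fun y => B y 2) x = 0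
    rw [hB0, hB1, hB2, pd4_flash σ hσ w b ζ, pd4_flash σ hσ w b ζ, pd4_flash σ hσ w b ζ]
    simp only [← Finset.sum_add_distrib]
    refine Finset.sum_eq_zero fun i _ => Finset.sum_eq_zero fun j _ =>
      Finset.sum_eq_zero fun k _ => ?_
    linear_combination
      (w i j k * deriv σ ((∑ n, x n * freq j (ζ i j k) n) + b i j k)) *
        key8 i (freq j (ζ i j k)) (freq_sq j (ζ i j k))

end
end

section
/- Let ξ = (ξ₁, ξ₂, ξ₃) ∈ ℝ³ with ξ₁ ≠ 0. Then the four vectors p₁(|ξ|, ξ), p₂(|ξ|, ξ), p₁(−|ξ|, ξ), p₂(−|ξ|, ξ) are linearly independent in ℝ⁶; equivalently, the 6×4 matrix P(ξ) with these columns has trivial kernel. -/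
open MeasureTheory Real Set

noncomputable section

lemma key_lemma (ξ : Fin 3 → ℝ) (hξ : ξ 0 ≠ 0) (v : Fin 4 → ℝ)
    (h : ∀ l : Fin 6,
      v 0 * p1NM (Matrix.vecCons (enorm3 ξ) ξ) l +
      v 1 * p2NM (Matrix.vecCons (enorm3 ξ) ξ) l +
      v 2 * p1NM (Matrix.vecCons (-enorm3 ξ) ξ) l +
      v 3 * p2NM (Matrix.vecCons (-enorm3 ξ) ξ) l = 0) : v = 0 := by
  set a := ξ 0 with ha
  set b := ξ 1
  set c := ξ 2
  set r := enorm3 ξ with hrdef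
  have hr2 : r ^ 2 = a ^ 2 + b ^ 2 + c ^ 2 := by
    rw [hrdef, enorm3, sq_sqrt]; positivity
  have hr0 : 0 < r := by
    rw [hrdef, enorm3]
    apply Real.sqrt_pos.mpr; positivity
  have h0 := h 0; have h1 := h 1; have h2 := h 2
  have h3 := h 3; have h4 := h 4; have h5 := h 5
  simp only [p1NM, p2NM, Matrix.cons_val_zero, Matrix.cons_val_one, Matrix.head_cons,
    Matrix.cons_val_succ, Matrix.vecHead, Matrix.vecTail, Function.comp,
    Fin.succ_zero_eq_one, Fin.succ_one_eq_two, show ((5:Fin 6)) = (4:Fin 5).succ from rfl,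
    show ((4:Fin 6)) = (3:Fin 5).succ from rfl] at h0 h1 h2 h3 h4 h5
  norm_num [← ha] at h0 h1 h2 h3 h4 h5
  have hb' : Matrix.vecHead (Matrix.vecTail ξ) = b := rfl
  have hc' : Matrix.vecHead (Matrix.vecTail (Matrix.vecTail ξ)) = c := rfl
  simp only [Matrix.cons_val] at h0 h1 h2 h3 h4 h5
  norm_num [← ha] at h0 h1 h2 h3 h4 h5
  rw [show ξ 1 = b from rfl, show ξ 2 = c from rfl] at h1 h2
  have hra : r * a ≠ 0 := mul_ne_zero hr0.ne' hξ
  have hv02 : v 0 = v 2 := by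
    have h4' : r * a * (v 0 - v 2) = 0 := by linear_combination h4
    have := (mul_eq_zero.mp h4').resolve_left hra
    linarith
  have hv13 : v 1 = v 3 := by
    have h5' : r * a * (v 1 - v 3) = 0 := by linear_combination h5
    have := (mul_eq_zero.mp h5').resolve_left hra
    linarith
  rw [← hv02] at h1 h2
  rw [← hv13] at h1 h2
  rw [hr2] at h1 h2
  have ha2 : 0 < a ^ 2 := by positivity
  have hD : 0 < a ^ 2 * (a ^ 2 + b ^ 2 + c ^ 2) := by nlinarith [sq_nonneg b, sq_nonneg c]
  have hv1 : v 1 = 0 := by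
    have e : a ^ 2 * (a ^ 2 + b ^ 2 + c ^ 2) * v 1 = 0 := by
      linear_combination (-(a ^ 2 + b ^ 2) / 2) * h1 + (-(b * c) / 2) * h2
    exact (mul_eq_zero.mp e).resolve_left hD.ne'
  have hv0 : v 0 = 0 := by
    have e : a ^ 2 * (a ^ 2 + b ^ 2 + c ^ 2) * v 0 = 0 := by
      linear_combination (b * c / 2) * h1 + ((a ^ 2 + c ^ 2) / 2) * h2
    exact (mul_eq_zero.mp e).resolve_left hD.ne'
  funext i
  fin_cases i <;> simp [hv0, hv1, ← hv02, ← hv13, hv0, hv1]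

/-- for `ξ₁ ≠ 0` the four vectors `p₁(±|ξ|,ξ), p₂(±|ξ|,ξ)`
are linearly independent in ℝ⁶; equivalently `P(ξ)` has trivial kernel. -/
theorem Pmat_linearIndependent (ξ : Fin 3 → ℝ) (hξ : ξ 0 ≠ 0) :
    LinearIndependent ℝ
      ![p1NM (Matrix.vecCons (enorm3 ξ) ξ), p2NM (Matrix.vecCons (enorm3 ξ) ξ),
        p1NM (Matrix.vecCons (-enorm3 ξ) ξ), p2NM (Matrix.vecCons (-enorm3 ξ) ξ)] ∧
    ∀ v : Fin 4 → ℝ, (Pmat ξ).mulVec v = 0 → v = 0 := by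
  constructor
  · rw [Fintype.linearIndependent_iff]
    intro g hg
    have hg0 : g = 0 := by
      apply key_lemma ξ hξ g
      intro l
      have := congrFun hg l
      simpa [Fin.sum_univ_four, Pi.add_apply, Pi.smul_apply, smul_eq_mul,
        Matrix.cons_val_zero, Matrix.cons_val_one, Matrix.head_cons] using this
    intro i
    rw [hg0]; rfl
  · intro v hv
    apply key_lemma ξ hξ v
    intro l
    have := congrFun hv l
    simp only [Pmat, Matrix.mulVec, dotProduct, Matrix.of_apply,
      Fin.sum_univ_four, Matrix.cons_val_zero, Matrix.cons_val_one, Matrix.head_cons,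
      Matrix.cons_val_two, Matrix.cons_val_three, Matrix.tail_cons, Pi.zero_apply] at this
    linear_combination this

end
end

section
/- Let m ≥ 0 and j ≥ 1 be integers, δ ∈ (0, 1), a = (a₁, a₂, a₃) ∈ ℝ³, and k₂, k₃ ∈ ℝ with |k₂| ≥ 1 and k₂² + k₃² ≤ j². Set v₁ = (δ, k₂, k₃), v₂ = (0, k₂, k₃), and ã = (a₁, a₂ − a₁δ/k₂, a₃). Then for every multi-index α ∈ ℕ³ with |α| ≤ m and every x ∈ [0, 2π]³, one has |∂^α[ ã cos(v₁·x) ] − ∂^α[ a cos(v₂·x) ]| ≤ 10 δ |a| j^m, where |·| on vectors denotes the Euclidean norm. -/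
open MeasureTheory Real Set

noncomputable section

/-- A planar cosine wave with direction `v`, amplitude `c`, and phase `θ`. -/
def wave3 (v : Fin 3 → ℝ) (c θ : ℝ) : (Fin 3 → ℝ) → ℝ :=
  fun x => c * Real.cos ((∑ i, v i * x i) + θ)

lemma pd3_wave3 (i : Fin 3) (v : Fin 3 → ℝ) (c θ : ℝ) :
    pd3 i (wave3 v c θ) = wave3 v (c * v i) (θ + π/2) := by
  funext x
  have hL : HasFDerivAt (fun x : Fin 3 → ℝ => (∑ j, v j * x j) + θ)
      (∑ j, v j • (ContinuousLinearMap.proj j : (Fin 3 → ℝ) →L[ℝ] ℝ)) x := by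
    have := ((∑ j, v j • (ContinuousLinearMap.proj j : (Fin 3 → ℝ) →L[ℝ] ℝ))).hasFDerivAt (x := x)
    have h2 := this.add_const θ
    refine HasFDerivAt.congr_of_eventuallyEq h2 (Filter.Eventually.of_forall fun y => ?_)
    simp [ContinuousLinearMap.sum_apply, mul_comm]
  have hc : HasFDerivAt (wave3 v c θ)
      (c • ((-Real.sin ((∑ j, v j * x j) + θ)) •
        (∑ j, v j • (ContinuousLinearMap.proj j : (Fin 3 → ℝ) →L[ℝ] ℝ)))) x := by
    exact ((Real.hasDerivAt_cos _).comp_hasFDerivAt x hL).const_mul c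
  rw [pd3, hc.fderiv]
  simp [wave3, ContinuousLinearMap.sum_apply, Pi.single_apply, ← add_assoc,
    Real.cos_add_pi_div_two]
  ring

lemma wave3_congr (v : Fin 3 → ℝ) {c c' θ θ' : ℝ} (hc : c = c') (hθ : θ = θ') :
    wave3 v c θ = wave3 v c' θ' := by rw [hc, hθ]

lemma iter_pd3_wave3 (i : Fin 3) (n : ℕ) (v : Fin 3 → ℝ) (c θ : ℝ) :
    (pd3 i)^[n] (wave3 v c θ) = wave3 v (c * v i ^ n) (θ + n * (π/2)) := by
  induction n with
  | zero => simp [wave3_congr]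
  | succ n ih =>
    rw [Function.iterate_succ_apply', ih, pd3_wave3]
    exact wave3_congr v (by ring) (by push_cast; ring)

lemma mderiv3_wave3 (α : Fin 3 → ℕ) (v : Fin 3 → ℝ) (c θ : ℝ) :
    mderiv3 α (wave3 v c θ) =
      wave3 v (c * v 0 ^ α 0 * v 1 ^ α 1 * v 2 ^ α 2)
        (θ + (α 0 + α 1 + α 2 : ℕ) * (π/2)) := by
  rw [mderiv3, iter_pd3_wave3, iter_pd3_wave3, iter_pd3_wave3]
  exact wave3_congr v (by ring) (by push_cast; ring)

lemma enorm3_eq_norm (v : Fin 3 → ℝ) :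
    enorm3 v = ‖(WithLp.equiv 2 (Fin 3 → ℝ)).symm v‖ := by
  rw [EuclideanSpace.norm_eq]
  simp [enorm3, Fin.sum_univ_three, Real.norm_eq_abs, sq_abs]

lemma enorm3_nonneg' (v : Fin 3 → ℝ) : 0 ≤ enorm3 v := Real.sqrt_nonneg _

lemma enorm3_add_le (p q : Fin 3 → ℝ) :
    enorm3 (fun c => p c + q c) ≤ enorm3 p + enorm3 q := by
  simp only [enorm3_eq_norm]
  exact norm_add_le ((WithLp.equiv 2 (Fin 3 → ℝ)).symm p) _

lemma enorm3_smul' (t : ℝ) (w : Fin 3 → ℝ) :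
    enorm3 (fun c => t * w c) = |t| * enorm3 w := by
  simp only [enorm3_eq_norm]
  have : (WithLp.equiv 2 (Fin 3 → ℝ)).symm (fun c => t * w c)
      = t • (WithLp.equiv 2 (Fin 3 → ℝ)).symm w := rfl
  rw [this, norm_smul, Real.norm_eq_abs]

lemma abs_comp_le_enorm3 (w : Fin 3 → ℝ) (c : Fin 3) : |w c| ≤ enorm3 w := by
  rw [← Real.sqrt_sq_eq_abs]
  apply Real.sqrt_le_sqrt
  fin_cases c <;> simp [sq_abs] <;>
    nlinarith [sq_nonneg (w 0), sq_nonneg (w 1), sq_nonneg (w 2)]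

lemma cos_lip (a b : ℝ) : |Real.cos a - Real.cos b| ≤ |a - b| := by
  rw [Real.cos_sub_cos]
  have h1 : |Real.sin ((a + b) / 2)| ≤ 1 :=
    abs_le.mpr ⟨Real.neg_one_le_sin _, Real.sin_le_one _⟩
  have h2 : |Real.sin ((a - b) / 2)| ≤ |(a - b) / 2| := Real.abs_sin_le_abs
  calc |(-2) * Real.sin ((a + b) / 2) * Real.sin ((a - b) / 2)|
      = 2 * |Real.sin ((a + b) / 2)| * |Real.sin ((a - b) / 2)| := by
        rw [abs_mul, abs_mul]; norm_num
    _ ≤ 2 * 1 * |(a - b) / 2| := by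
        apply mul_le_mul (by nlinarith [abs_nonneg (Real.sin ((a+b)/2))]) h2
          (abs_nonneg _) (by norm_num)
    _ = |a - b| := by rw [abs_div, abs_two]; ring

/-- quantitative bound for replacing the frequency `(0,k₂,k₃)` by
the perturbed frequency `(δ,k₂,k₃)` (with the divergence-corrected amplitude). -/
theorem frequency_perturbation_bound (m j : ℕ) (hj : 1 ≤ j)
    (δ : ℝ) (hδ : δ ∈ Set.Ioo (0 : ℝ) 1) (a : Fin 3 → ℝ) (k₂ k₃ : ℝ)
    (hk₂ : 1 ≤ |k₂|) (hkj : k₂ ^ 2 + k₃ ^ 2 ≤ (j : ℝ) ^ 2)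
    (α : Fin 3 → ℕ) (hα : (∑ i, α i) ≤ m)
    (x : Fin 3 → ℝ) (hx : ∀ i, x i ∈ Set.Icc 0 (2 * π)) :
    enorm3 (fun c =>
        mderiv3 α (fun y => ![a 0, a 1 - a 0 * δ / k₂, a 2] c *
          Real.cos (δ * y 0 + k₂ * y 1 + k₃ * y 2)) x -
        mderiv3 α (fun y => a c * Real.cos (k₂ * y 1 + k₃ * y 2)) x) ≤
      10 * δ * enorm3 a * (j : ℝ) ^ m := by
  obtain ⟨hδ0, hδ1⟩ := hδ
  have hj1 : (1 : ℝ) ≤ (j : ℝ) := by exact_mod_cast hj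
  set ta : Fin 3 → ℝ := ![a 0, a 1 - a 0 * δ / k₂, a 2] with hta
  set v1 : Fin 3 → ℝ := ![δ, k₂, k₃] with hv1
  set v2 : Fin 3 → ℝ := ![0, k₂, k₃] with hv2
  set θ : ℝ := ((α 0 + α 1 + α 2 : ℕ) : ℝ) * (π/2) with hθ
  set u1 : ℝ := ∑ i, v1 i * x i with hu1
  set u2 : ℝ := ∑ i, v2 i * x i with hu2
  set K : ℝ := k₂ ^ α 1 * k₃ ^ α 2 with hKdef
  have h1 : ∀ c, mderiv3 α (fun y => ta c * Real.cos (δ * y 0 + k₂ * y 1 + k₃ * y 2)) x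
      = ta c * (δ ^ α 0 * K) * Real.cos (u1 + θ) := by
    intro c
    have hf : (fun y => ta c * Real.cos (δ * y 0 + k₂ * y 1 + k₃ * y 2))
        = wave3 v1 (ta c) 0 := by
      funext y; simp [wave3, hv1, Fin.sum_univ_three]
    rw [hf, mderiv3_wave3]
    simp only [wave3, hv1, Matrix.cons_val_zero, Matrix.cons_val_one, Matrix.head_cons,
      Matrix.cons_val_two, Matrix.tail_cons, zero_add, hu1, hθ, hKdef]
    ring_nf
  have h2 : ∀ c, mderiv3 α (fun y => a c * Real.cos (k₂ * y 1 + k₃ * y 2)) x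
      = a c * ((0:ℝ) ^ α 0 * K) * Real.cos (u2 + θ) := by
    intro c
    have hf : (fun y => a c * Real.cos (k₂ * y 1 + k₃ * y 2))
        = wave3 v2 (a c) 0 := by
      funext y; simp [wave3, hv2, Fin.sum_univ_three]
    rw [hf, mderiv3_wave3]
    simp only [wave3, hv2, Matrix.cons_val_zero, Matrix.cons_val_one, Matrix.head_cons,
      Matrix.cons_val_two, Matrix.tail_cons, zero_add, hu2, hθ, hKdef]
    ring_nf
  simp only [h1, h2]
  -- basic bounds
  have hE := enorm3_nonneg' a
  have hjm : (0:ℝ) < (j:ℝ) ^ m := by positivity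
  have hk2sq : |k₂| ^ 2 ≤ ((j : ℝ)) ^ 2 := by rw [sq_abs]; nlinarith [sq_nonneg k₃]
  have hk3sq : |k₃| ^ 2 ≤ ((j : ℝ)) ^ 2 := by rw [sq_abs]; nlinarith [sq_nonneg k₂]
  have hk2j : |k₂| ≤ (j : ℝ) :=
    le_of_pow_le_pow_left₀ two_ne_zero (by positivity) hk2sq
  have hk3j : |k₃| ≤ (j : ℝ) :=
    le_of_pow_le_pow_left₀ two_ne_zero (by positivity) hk3sq
  have hα12 : α 1 + α 2 ≤ m := by
    have : ∑ i, α i = α 0 + α 1 + α 2 := by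
      simp [Fin.sum_univ_three]
    omega
  have hK : |K| ≤ (j : ℝ) ^ m := by
    calc |K| = |k₂| ^ α 1 * |k₃| ^ α 2 := by rw [hKdef, abs_mul, abs_pow, abs_pow]
      _ ≤ (j : ℝ) ^ α 1 * (j : ℝ) ^ α 2 := by
          apply mul_le_mul (pow_le_pow_left₀ (abs_nonneg _) hk2j _)
            (pow_le_pow_left₀ (abs_nonneg _) hk3j _) (by positivity) (by positivity)
      _ = (j : ℝ) ^ (α 1 + α 2) := by rw [pow_add]
      _ ≤ (j : ℝ) ^ m := pow_le_pow_right₀ hj1 hα12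
  have hdiff : enorm3 (fun c => ta c - a c) ≤ δ * enorm3 a := by
    have hfd : (fun c => ta c - a c) = ![0, -(a 0 * δ / k₂), 0] := by
      funext c; fin_cases c <;> simp [hta] <;> ring
    have he : enorm3 (fun c => ta c - a c) = |a 0 * δ / k₂| := by
      rw [hfd, enorm3]
      simp [Real.sqrt_sq_eq_abs]
    rw [he]
    have : |a 0 * δ / k₂| = |a 0| * δ / |k₂| := by
      rw [abs_div, abs_mul, abs_of_pos hδ0]
    rw [this]
    have h1' : |a 0| * δ / |k₂| ≤ |a 0| * δ :=
      div_le_self (by positivity) hk₂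
    have h2' : |a 0| * δ ≤ enorm3 a * δ :=
      mul_le_mul_of_nonneg_right (abs_comp_le_enorm3 a 0) hδ0.le
    linarith
  rcases Nat.eq_zero_or_pos (α 0) with h0 | h0
  · -- α 0 = 0 : need the Lipschitz estimate
    have hu12 : u1 - u2 = δ * x 0 := by
      simp [hu1, hu2, hv1, hv2, Fin.sum_univ_three]
      try ring
    have hcosd : |Real.cos (u1 + θ) - Real.cos (u2 + θ)| ≤ 2 * π * δ := by
      calc |Real.cos (u1 + θ) - Real.cos (u2 + θ)| ≤ |(u1 + θ) - (u2 + θ)| := cos_lip _ _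
        _ = |δ * x 0| := by rw [show (u1 + θ) - (u2 + θ) = u1 - u2 by ring, hu12]
        _ = δ * x 0 := abs_of_nonneg (mul_nonneg hδ0.le (hx 0).1)
        _ ≤ 2 * π * δ := by nlinarith [(hx 0).2, hδ0]
    have hsplit : (fun c => ta c * (δ ^ α 0 * K) * Real.cos (u1 + θ)
          - a c * ((0:ℝ) ^ α 0 * K) * Real.cos (u2 + θ))
        = (fun c => (K * Real.cos (u1 + θ)) * (ta c - a c)
            + (K * (Real.cos (u1 + θ) - Real.cos (u2 + θ))) * a c) := by
      funext c; rw [h0]; simp; ring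
    rw [hsplit]
    have hb1 : |K * Real.cos (u1 + θ)| ≤ (j : ℝ) ^ m := by
      rw [abs_mul]
      calc |K| * |Real.cos (u1 + θ)| ≤ (j:ℝ)^m * 1 :=
          mul_le_mul hK (Real.abs_cos_le_one _) (abs_nonneg _) (le_of_lt hjm)
        _ = (j:ℝ)^m := mul_one _
    have hb2 : |K * (Real.cos (u1 + θ) - Real.cos (u2 + θ))| ≤ (j:ℝ)^m * (2 * π * δ) := by
      rw [abs_mul]
      exact mul_le_mul hK hcosd (abs_nonneg _) (le_of_lt hjm)
    calc enorm3 (fun c => (K * Real.cos (u1 + θ)) * (ta c - a c)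
            + (K * (Real.cos (u1 + θ) - Real.cos (u2 + θ))) * a c)
        ≤ enorm3 (fun c => (K * Real.cos (u1 + θ)) * (ta c - a c))
          + enorm3 (fun c => (K * (Real.cos (u1 + θ) - Real.cos (u2 + θ))) * a c) :=
          enorm3_add_le _ _
      _ = |K * Real.cos (u1 + θ)| * enorm3 (fun c => ta c - a c)
          + |K * (Real.cos (u1 + θ) - Real.cos (u2 + θ))| * enorm3 a := by
          rw [enorm3_smul', enorm3_smul']
      _ ≤ (j:ℝ)^m * (δ * enorm3 a) + ((j:ℝ)^m * (2 * π * δ)) * enorm3 a := by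
          apply add_le_add
          · exact mul_le_mul hb1 hdiff (enorm3_nonneg' _) (le_of_lt hjm)
          · exact mul_le_mul_of_nonneg_right hb2 hE
      _ ≤ 10 * δ * enorm3 a * (j:ℝ)^m := by
          nlinarith [Real.pi_le_four, mul_nonneg (mul_nonneg hδ0.le hE) hjm.le]
  · -- α 0 ≥ 1
    have hz : ((0:ℝ)) ^ α 0 = 0 := zero_pow h0.ne'
    have hδa : δ ^ α 0 ≤ δ := pow_le_of_le_one hδ0.le hδ1.le h0.ne'
    have hsplit : (fun c => ta c * (δ ^ α 0 * K) * Real.cos (u1 + θ)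
          - a c * ((0:ℝ) ^ α 0 * K) * Real.cos (u2 + θ))
        = (fun c => (δ ^ α 0 * K * Real.cos (u1 + θ)) * ta c) := by
      funext c; simp only [hz, zero_mul, mul_zero, zero_sub, sub_zero]; ring
    rw [hsplit, enorm3_smul']
    have hbta : enorm3 ta ≤ 2 * enorm3 a := by
      have h' := enorm3_add_le (fun c => ta c - a c) a
      have : (fun c => (ta c - a c) + a c) = ta := by funext c; ring
      rw [this] at h'
      have hde : δ * enorm3 a ≤ 1 * enorm3 a := mul_le_mul_of_nonneg_right hδ1.le hE
      linarith [h', hdiff, hde]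
    have hbc : |δ ^ α 0 * K * Real.cos (u1 + θ)| ≤ δ * (j:ℝ)^m := by
      rw [abs_mul, abs_mul]
      calc |δ ^ α 0| * |K| * |Real.cos (u1 + θ)| ≤ δ * (j:ℝ)^m * 1 := by
            apply mul_le_mul _ (Real.abs_cos_le_one _) (abs_nonneg _) (by positivity)
            apply mul_le_mul _ hK (abs_nonneg _) hδ0.le
            rw [abs_of_nonneg (by positivity)]; exact hδa
        _ = δ * (j:ℝ)^m := mul_one _
    calc |δ ^ α 0 * K * Real.cos (u1 + θ)| * enorm3 ta
        ≤ (δ * (j:ℝ)^m) * (2 * enorm3 a) := by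
          apply mul_le_mul hbc hbta (enorm3_nonneg' _) (by positivity)
      _ = 2 * (δ * enorm3 a * (j:ℝ)^m) := by ring
      _ ≤ 10 * (δ * enorm3 a * (j:ℝ)^m) := by
          have h8 : 0 ≤ δ * enorm3 a * (j:ℝ)^m := mul_nonneg (mul_nonneg hδ0.le hE) hjm.le
          linarith
      _ = 10 * δ * enorm3 a * (j:ℝ)^m := by ring


end
end

section
/- Let T > 0 and let (E, B) be a C¹ classical solution of the homogeneous Maxwell equations on an open neighborhood of [0, T] × ℝ³ such that there is a compact set K ⊂ ℝ³ with E(t, x) = B(t, x) = 0 for all t ∈ [0, T] and x ∉ K. Then the function t ↦ ∫_{ℝ³} (|E(t, x)|² + |B(t, x)|²) dx is constant on [0, T]. -/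
open MeasureTheory Real Set

noncomputable section

def Fcur (E B : (Fin 4 → ℝ) → Fin 3 → ℝ) : (Fin 4 → ℝ) → Fin 4 → ℝ := fun x =>
  ![E x 0 * E x 0 + E x 1 * E x 1 + E x 2 * E x 2 + B x 0 * B x 0 + B x 1 * B x 1 + B x 2 * B x 2,
    2 * (E x 1 * B x 2 - E x 2 * B x 1),
    2 * (E x 2 * B x 0 - E x 0 * B x 2),
    2 * (E x 0 * B x 1 - E x 1 * B x 0)]

lemma Fcur_diff (E B : (Fin 4 → ℝ) → Fin 3 → ℝ) (x : Fin 4 → ℝ)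
    (hEd : ∀ c, DifferentiableAt ℝ (fun y => E y c) x)
    (hBd : ∀ c, DifferentiableAt ℝ (fun y => B y c) x) :
    ∀ i, DifferentiableAt ℝ (fun y => Fcur E B y i) x := by
  have d0 : DifferentiableAt ℝ (fun y => Fcur E B y 0) x := by
    simp only [Fcur, Matrix.cons_val_zero]; fun_prop
  have d1 : DifferentiableAt ℝ (fun y => Fcur E B y 1) x := by
    simp only [Fcur, Matrix.cons_val_one, Matrix.head_cons, Matrix.cons_val_zero]; fun_prop
  have d2 : DifferentiableAt ℝ (fun y => Fcur E B y 2) x := by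
    simp only [Fcur, Matrix.cons_val_two, Matrix.tail_cons, Matrix.head_cons]; fun_prop
  have d3 : DifferentiableAt ℝ (fun y => Fcur E B y 3) x := by
    simp only [Fcur, Matrix.cons_val_three, Matrix.tail_cons, Matrix.head_cons]; fun_prop
  intro i
  fin_cases i
  exacts [d0, d1, d2, d3]

lemma Fcur_div (E B : (Fin 4 → ℝ) → Fin 3 → ℝ) (x : Fin 4 → ℝ)
    (hEd : ∀ c, DifferentiableAt ℝ (fun y => E y c) x)
    (hBd : ∀ c, DifferentiableAt ℝ (fun y => B y c) x)
    (hM : MaxwellAt E B x) :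
    ∑ i : Fin 4, fderiv ℝ (Fcur E B) x (Pi.single i 1) i = 0 := by
  have hpi : fderiv ℝ (Fcur E B) x =
      ContinuousLinearMap.pi fun i => fderiv ℝ (fun y => Fcur E B y i) x :=
    fderiv_pi (Fcur_diff E B x hEd hBd)
  rw [hpi]
  simp only [ContinuousLinearMap.pi_apply, Fin.sum_univ_four]
  have hE0 := (hEd 0).hasFDerivAt; have hE1 := (hEd 1).hasFDerivAt
  have hE2 := (hEd 2).hasFDerivAt; have hB0 := (hBd 0).hasFDerivAt
  have hB1 := (hBd 1).hasFDerivAt; have hB2 := (hBd 2).hasFDerivAt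
  have h0 := (((((hE0.mul hE0).add (hE1.mul hE1)).add (hE2.mul hE2)).add
      (hB0.mul hB0)).add (hB1.mul hB1)).add (hB2.mul hB2)
  have h1 := ((hE1.mul hB2).sub (hE2.mul hB1)).const_mul (2:ℝ)
  have h2 := ((hE2.mul hB0).sub (hE0.mul hB2)).const_mul (2:ℝ)
  have h3 := ((hE0.mul hB1).sub (hE1.mul hB0)).const_mul (2:ℝ)
  simp only [Fcur, Matrix.cons_val_zero, Matrix.cons_val_one, Matrix.head_cons,
      Matrix.cons_val_two, Matrix.tail_cons, Matrix.cons_val_three, Fin.isValue]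
  simp only [Pi.add_def, Pi.mul_def, Pi.sub_def] at h0 h1 h2 h3
  rw [h0.fderiv, h1.fderiv, h2.fderiv, h3.fderiv]
  simp only [ContinuousLinearMap.add_apply, ContinuousLinearMap.sub_apply,
    ContinuousLinearMap.smul_apply, smul_eq_mul]
  obtain ⟨hM1, hM2, -, -⟩ := hM
  have q10 := hM1 0; have q11 := hM1 1; have q12 := hM1 2
  have q20 := hM2 0; have q21 := hM2 1; have q22 := hM2 2
  simp only [pd4, scurl, Matrix.cons_val_zero, Matrix.cons_val_one, Matrix.head_cons,
    Matrix.cons_val_two, Matrix.tail_cons, Fin.isValue] at q10 q11 q12 q20 q21 q22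
  linear_combination (2 * E x 0) * q10 + (2 * E x 1) * q11 + (2 * E x 2) * q12 +
    (2 * B x 0) * q20 + (2 * B x 1) * q21 + (2 * B x 2) * q22

lemma maxwell_aux (T : ℝ)
    (U : Set (Fin 4 → ℝ)) (hU : IsOpen U)
    (hUslab : {x : Fin 4 → ℝ | x 0 ∈ Set.Icc 0 T} ⊆ U)
    (E B : (Fin 4 → ℝ) → Fin 3 → ℝ)
    (hE : ContDiffOn ℝ 1 E U) (hB : ContDiffOn ℝ 1 B U)
    (hMax : ∀ x ∈ U, MaxwellAt E B x)
    (K : Set (Fin 3 → ℝ)) (hK : IsCompact K)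
    (hsupp : ∀ t ∈ Set.Icc (0 : ℝ) T, ∀ y ∉ K, E (emb0 t y) = 0 ∧ B (emb0 t y) = 0)
    (t₁ t₂ : ℝ) (ht₁ : t₁ ∈ Set.Icc (0:ℝ) T) (ht₂ : t₂ ∈ Set.Icc (0:ℝ) T) (h12 : t₁ ≤ t₂) :
    (∫ y : Fin 3 → ℝ,
        ((∑ c : Fin 3, E (emb0 t₁ y) c ^ 2) + ∑ c : Fin 3, B (emb0 t₁ y) c ^ 2)) =
      ∫ y : Fin 3 → ℝ,
        ((∑ c : Fin 3, E (emb0 t₂ y) c ^ 2) + ∑ c : Fin 3, B (emb0 t₂ y) c ^ 2) := by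
  classical
  obtain ⟨C, hC⟩ := hK.isBounded.exists_norm_le
  set R : ℝ := |C| + 1 with hRdef
  have hR0 : 0 < R := by positivity
  have hnotK : ∀ y : Fin 3 → ℝ, (∃ m, R ≤ |y m|) → y ∉ K := by
    rintro y ⟨m, hm⟩ hyK
    have h1 := hC y hyK
    have h2 : |y m| ≤ ‖y‖ := by simpa using norm_le_pi_norm y m
    have h3 : C ≤ |C| := le_abs_self C
    simp only [hRdef] at hm
    linarith
  -- if the time coordinate is in [t₁,t₂] and some spatial coordinate is ≥ R, fields vanish
  have hvanish : ∀ z : Fin 4 → ℝ, t₁ ≤ z 0 → z 0 ≤ t₂ → (∃ m : Fin 3, R ≤ |z m.succ|) →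
      E z = 0 ∧ B z = 0 := by
    intro z hz1 hz2 hm
    have hz0 : z 0 ∈ Set.Icc (0:ℝ) T := ⟨le_trans ht₁.1 hz1, le_trans hz2 ht₂.2⟩
    have hKout : (fun m => z m.succ) ∉ K := hnotK _ hm
    have h := hsupp (z 0) hz0 _ hKout
    rwa [show emb0 (z 0) (fun m => z m.succ) = z from Fin.cons_self_tail z] at h
  set a : Fin 4 → ℝ := Matrix.vecCons t₁ (fun _ => -R) with ha
  set b : Fin 4 → ℝ := Matrix.vecCons t₂ (fun _ => R) with hb
  have hle : a ≤ b := by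
    intro i
    refine Fin.cases ?_ (fun j => ?_) i
    · simpa [ha, hb] using h12
    · simp only [ha, hb, Matrix.cons_val_succ]
      linarith
  have hsub : Set.Icc a b ⊆ U := by
    intro x hx
    rw [Set.mem_Icc] at hx
    apply hUslab
    have h1 := hx.1 0
    have h2 := hx.2 0
    simp only [ha, Matrix.cons_val_zero] at h1
    simp only [hb, Matrix.cons_val_zero] at h2
    exact ⟨le_trans ht₁.1 h1, le_trans h2 ht₂.2⟩
  have hEd : ∀ x ∈ U, ∀ c, DifferentiableAt ℝ (fun y => E y c) x := fun x hx c =>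
    differentiableAt_pi.mp ((hE.differentiableOn one_ne_zero).differentiableAt (hU.mem_nhds hx)) c
  have hBd : ∀ x ∈ U, ∀ c, DifferentiableAt ℝ (fun y => B y c) x := fun x hx c =>
    differentiableAt_pi.mp ((hB.differentiableOn one_ne_zero).differentiableAt (hU.mem_nhds hx)) c
  -- continuity of the current on the box
  have cE : ∀ c : Fin 3, ContinuousOn (fun y => E y c) (Set.Icc a b) := fun c =>
    (continuous_apply c).comp_continuousOn (hE.continuousOn.mono hsub)
  have cB : ∀ c : Fin 3, ContinuousOn (fun y => B y c) (Set.Icc a b) := fun c =>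
    (continuous_apply c).comp_continuousOn (hB.continuousOn.mono hsub)
  have hFc : ContinuousOn (Fcur E B) (Set.Icc a b) := by
    have c0 : ContinuousOn (fun y => Fcur E B y 0) (Set.Icc a b) := by
      simp only [Fcur, Matrix.cons_val_zero]; fun_prop
    have c1 : ContinuousOn (fun y => Fcur E B y 1) (Set.Icc a b) := by
      simp only [Fcur, Matrix.cons_val_one, Matrix.head_cons]; fun_prop
    have c2 : ContinuousOn (fun y => Fcur E B y 2) (Set.Icc a b) := by
      simp only [Fcur, Matrix.cons_val_two, Matrix.tail_cons, Matrix.head_cons]; fun_prop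
    have c3 : ContinuousOn (fun y => Fcur E B y 3) (Set.Icc a b) := by
      simp only [Fcur, Matrix.cons_val_three, Matrix.tail_cons, Matrix.head_cons]; fun_prop
    apply continuousOn_pi.mpr
    intro i; fin_cases i
    exacts [c0, c1, c2, c3]
  have hdivzero : ∀ x ∈ Set.Icc a b,
      (fun x => ∑ i : Fin 4, fderiv ℝ (Fcur E B) x (Pi.single i 1) i) x = (0:ℝ) := by
    intro x hx
    exact Fcur_div E B x (hEd x (hsub hx)) (hBd x (hsub hx)) (hMax x (hsub hx))
  have hdiffF : ∀ x ∈ Set.Icc a b, DifferentiableAt ℝ (Fcur E B) x := fun x hx =>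
    differentiableAt_pi.mpr (Fcur_diff E B x (hEd x (hsub hx)) (hBd x (hsub hx)))
  have hthm := integral_divergence_of_hasFDerivAt_off_countable a b hle (Fcur E B)
      (fun x => fderiv ℝ (Fcur E B) x) ∅ Set.countable_empty hFc
      (fun x hx => by
        refine (hdiffF x ?_).hasFDerivAt
        rw [Set.mem_Icc]
        exact ⟨fun i => (hx.1 i trivial).1.le, fun i => (hx.1 i trivial).2.le⟩)
      (by
        refine (integrableOn_congr_fun hdivzero measurableSet_Icc).mpr ?_
        simp)
  rw [setIntegral_congr_fun measurableSet_Icc hdivzero, integral_zero] at hthm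
  rw [Fin.sum_univ_four] at hthm
  -- spatial faces vanish
  have hface : ∀ (i : Fin 4), i ≠ 0 → ∀ r : ℝ, |r| = R →
      (∫ x in Set.Icc (a ∘ i.succAbove) (b ∘ i.succAbove),
        Fcur E B (i.insertNth r x) i) = 0 := by
    intro i hi r hr
    have hkey : ∀ x ∈ Set.Icc (a ∘ i.succAbove) (b ∘ i.succAbove),
        Fcur E B (i.insertNth r x) i = (0:ℝ) := by
      intro x hx
      obtain ⟨m, hm⟩ := Fin.exists_succ_eq.mpr hi
      set z : Fin 4 → ℝ := i.insertNth r x with hz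
      have hsA : i.succAbove 0 = 0 := by
        rw [← hm]
        exact Fin.succAbove_of_castSucc_lt _ _ (by simp [Fin.lt_def])
      have hz0 : z 0 = x 0 := by
        rw [← hsA, hz]
        exact Fin.insertNth_apply_succAbove (α := fun _ => ℝ) i r x 0
      rw [Set.mem_Icc] at hx
      have h1 := hx.1 0
      have h2 := hx.2 0
      rw [Function.comp_apply, hsA] at h1 h2
      simp only [ha, hb, Matrix.cons_val_zero] at h1 h2
      have hzi : z m.succ = r := by rw [hm, hz]; exact Fin.insertNth_apply_same (α := fun _ => ℝ) i r x
      obtain ⟨hEz, hBz⟩ := hvanish z (by rw [hz0]; exact h1) (by rw [hz0]; exact h2)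
        ⟨m, by rw [hzi, hr]⟩
      have h4 : Fcur E B z = ![(0:ℝ),0,0,0] := by
        simp only [Fcur, hEz, hBz, Pi.zero_apply, mul_zero, zero_mul, add_zero, zero_add,
          sub_zero, sub_self, zero_add]
      rw [h4]
      have : (![(0:ℝ),0,0,0] : Fin 4 → ℝ) = 0 := by
        funext j; fin_cases j <;> rfl
      rw [this]; rfl
    rw [setIntegral_congr_fun measurableSet_Icc hkey]
    simp
  have habs_a : ∀ j : Fin 3, |a j.succ| = R := by
    intro j
    simp only [ha, Matrix.cons_val_succ, abs_neg]
    exact abs_of_pos hR0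
  have habs_b : ∀ j : Fin 3, |b j.succ| = R := by
    intro j
    simp only [hb, Matrix.cons_val_succ]
    exact abs_of_pos hR0
  have e1 : ((0:Fin 3)).succ = (1 : Fin 4) := rfl
  have e2 : ((1:Fin 3)).succ = (2 : Fin 4) := rfl
  have e3 : ((2:Fin 3)).succ = (3 : Fin 4) := rfl
  have f1b := hface 1 (by decide) (b 1) (by rw [← e1]; exact habs_b 0)
  have f1a := hface 1 (by decide) (a 1) (by rw [← e1]; exact habs_a 0)
  have f2b := hface 2 (by decide) (b 2) (by rw [← e2]; exact habs_b 1)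
  have f2a := hface 2 (by decide) (a 2) (by rw [← e2]; exact habs_a 1)
  have f3b := hface 3 (by decide) (b 3) (by rw [← e3]; exact habs_b 2)
  have f3a := hface 3 (by decide) (a 3) (by rw [← e3]; exact habs_a 2)
  rw [f1b, f1a, f2b, f2a, f3b, f3a] at hthm
  -- the time faces give the energies
  have hfull : ∀ t, t ∈ Set.Icc (0:ℝ) T →
      (∫ x in Set.Icc (a ∘ Fin.succAbove 0) (b ∘ Fin.succAbove 0),
        Fcur E B (Fin.insertNth 0 t x) 0) =
      ∫ y : Fin 3 → ℝ,
        ((∑ c : Fin 3, E (emb0 t y) c ^ 2) + ∑ c : Fin 3, B (emb0 t y) c ^ 2) := by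
    intro t ht
    have step1 : (∫ x in Set.Icc (a ∘ Fin.succAbove 0) (b ∘ Fin.succAbove 0),
        Fcur E B (Fin.insertNth 0 t x) 0) =
        ∫ y in Set.Icc (a ∘ Fin.succAbove 0) (b ∘ Fin.succAbove 0),
          ((∑ c : Fin 3, E (emb0 t y) c ^ 2) + ∑ c : Fin 3, B (emb0 t y) c ^ 2) := by
      refine setIntegral_congr_fun measurableSet_Icc (fun y _ => ?_)
      rw [show (Fin.insertNth 0 t y : Fin 4 → ℝ) = emb0 t y from Fin.insertNth_zero' t y]
      simp only [Fcur, Matrix.cons_val_zero, Fin.sum_univ_three]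
      ring
    rw [step1]
    refine setIntegral_eq_integral_of_forall_compl_eq_zero (fun y hy => ?_)
    have hex : ∃ m, R ≤ |y m| := by
      by_contra hcon
      push_neg at hcon
      apply hy
      rw [Set.mem_Icc]
      constructor <;> intro m <;>
        simp only [Function.comp_apply, Fin.succAbove_zero, ha, hb, Matrix.cons_val_succ]
      · have := abs_lt.mp (hcon m); linarith [this.1]
      · have := abs_lt.mp (hcon m); linarith [(abs_lt.mp (hcon m)).2]
    obtain ⟨hEy, hBy⟩ := hsupp t ht y (hnotK y hex)
    simp [hEy, hBy]
  rw [show b 0 = t₂ from rfl, show a 0 = t₁ from rfl] at hthm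
  rw [hfull t₂ ht₂, hfull t₁ ht₁] at hthm
  linarith

/-- conservation of the `L²`-energy of a compactly supported
`C¹` Maxwell solution on `[0,T] × ℝ³`. -/
theorem maxwell_energy_conservation (T : ℝ) (hT : 0 < T)
    (U : Set (Fin 4 → ℝ)) (hU : IsOpen U)
    (hUslab : {x : Fin 4 → ℝ | x 0 ∈ Set.Icc 0 T} ⊆ U)
    (E B : (Fin 4 → ℝ) → Fin 3 → ℝ)
    (hE : ContDiffOn ℝ 1 E U) (hB : ContDiffOn ℝ 1 B U)
    (hMax : ∀ x ∈ U, MaxwellAt E B x)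
    (K : Set (Fin 3 → ℝ)) (hK : IsCompact K)
    (hsupp : ∀ t ∈ Set.Icc (0 : ℝ) T, ∀ y ∉ K, E (emb0 t y) = 0 ∧ B (emb0 t y) = 0) :
    ∀ t₁ ∈ Set.Icc (0 : ℝ) T, ∀ t₂ ∈ Set.Icc (0 : ℝ) T,
      (∫ y : Fin 3 → ℝ,
        ((∑ c : Fin 3, E (emb0 t₁ y) c ^ 2) + ∑ c : Fin 3, B (emb0 t₁ y) c ^ 2)) =
      ∫ y : Fin 3 → ℝ,
        ((∑ c : Fin 3, E (emb0 t₂ y) c ^ 2) + ∑ c : Fin 3, B (emb0 t₂ y) c ^ 2) := by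
  intro t₁ ht₁ t₂ ht₂
  rcases le_total t₁ t₂ with h | h
  · exact maxwell_aux T U hU hUslab E B hE hB hMax K hK hsupp t₁ t₂ ht₁ ht₂ h
  · exact (maxwell_aux T U hU hUslab E B hE hB hMax K hK hsupp t₂ t₁ ht₂ ht₁ h).symm

end
end
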